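/- arXiv:2104.08888 — 2 statements merged into one kernel-verified Lean document; each statement's English description precedes it below -/
import Mathlib

section
/- Let F be a field. Define a hyperoperation ⊕ on F by: a ⊕ b = {a, b, a+b} when a ≠ 0, b ≠ 0, and a ≠ -b; a ⊕ 0 = 0 ⊕ a = {a} for all a; and a ⊕ (-a) = F for all a ≠ 0. Then (F, ⊕) with the multiplication of F is a Krasner hyperfield. -/
/-- Extension of a hyperoperation to subsets: `A ⊕ B = ⋃_{a∈A,b∈B} a ⊕ b`. -/
def hAddSet {R : Type*} (add : R → R → Set R) (A B : Set R) : Set R :=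
  ⋃ a ∈ A, ⋃ b ∈ B, add a b

/-- Canonical hypergroup. -/
structure IsCanonicalHypergroup {R : Type*} (add : R → R → Set R) (zero : R) : Prop where
  nonempty : ∀ x y, (add x y).Nonempty
  comm : ∀ x y, add x y = add y x
  assoc : ∀ x y z, hAddSet add (add x y) {z} = hAddSet add {x} (add y z)
  zero_add : ∀ x, add zero x = {x}
  opp : ∀ x, ∃! x', zero ∈ add x x'
  rev : ∀ x y z x' y', zero ∈ add x x' → zero ∈ add y y' →
    z ∈ add x y → y ∈ add x' z ∧ x ∈ add z y'

/-- Commutative Krasner hyperring with unit. -/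
structure IsKrasnerHyperring {R : Type*} (add : R → R → Set R) (mul : R → R → R)
    (zero one : R) : Prop where
  toCanonical : IsCanonicalHypergroup add zero
  mul_assoc : ∀ a b c, mul (mul a b) c = mul a (mul b c)
  mul_comm : ∀ a b, mul a b = mul b a
  one_mul : ∀ a, mul one a = a
  zero_mul : ∀ a, mul zero a = zero
  mul_zero : ∀ a, mul a zero = zero
  left_distrib : ∀ a b c, mul a '' add b c = add (mul a b) (mul a c)
  right_distrib : ∀ a b c, (fun x => mul x a) '' add b c = add (mul b a) (mul c a)

/-- Krasner hyperfield. -/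
structure IsKrasnerHyperfield {R : Type*} (add : R → R → Set R) (mul : R → R → R)
    (zero one : R) : Prop where
  toHyperring : IsKrasnerHyperring add mul zero one
  zero_ne_one : zero ≠ one
  inv : ∀ a, a ≠ zero → ∃ b, b ≠ zero ∧ mul a b = one

open Classical in
/-- The Massouros hyperoperation on a field. -/
noncomputable def massAdd {F : Type*} [Field F] (a b : F) : Set F :=
  if a = 0 then {b}
  else if b = 0 then {a}
  else if b = -a then Set.univ
  else {a, b, a + b}

section helpers
variable {F : Type*} [Field F]

omit [Field F] in
lemma mem_hAddSet {add : F → F → Set F} {A B : Set F} {t : F} :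
    t ∈ hAddSet add A B ↔ ∃ a ∈ A, ∃ b ∈ B, t ∈ add a b := by
  simp [hAddSet]

lemma massAdd_zero_left (b : F) : massAdd 0 b = {b} := by simp [massAdd]

lemma massAdd_zero_right (a : F) : massAdd a 0 = {a} := by
  rcases eq_or_ne a 0 with rfl | ha
  · simp [massAdd]
  · simp [massAdd, ha]

lemma massAdd_neg {a : F} (ha : a ≠ 0) : massAdd a (-a) = Set.univ := by
  simp [massAdd, ha, neg_eq_zero]

lemma massAdd_neg' {a : F} (ha : a ≠ 0) : massAdd (-a) a = Set.univ := by
  have h := massAdd_neg (neg_ne_zero.mpr ha)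
  rwa [neg_neg] at h

lemma massAdd_of {a b : F} (ha : a ≠ 0) (hb : b ≠ 0) (hab : b ≠ -a) :
    massAdd a b = {a, b, a + b} := by
  simp [massAdd, ha, hb, hab]

lemma massAdd_nonempty (a b : F) : (massAdd a b).Nonempty := by
  unfold massAdd; split_ifs <;> simp

lemma massAdd_comm (a b : F) : massAdd a b = massAdd b a := by
  rcases eq_or_ne a 0 with rfl | ha
  · rw [massAdd_zero_left, massAdd_zero_right]
  rcases eq_or_ne b 0 with rfl | hb
  · rw [massAdd_zero_left, massAdd_zero_right]
  rcases eq_or_ne b (-a) with rfl | hab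
  · rw [massAdd_neg ha, massAdd_neg' ha]
  · have hba : a ≠ -b := by
      intro h; subst h; simp at hab
    rw [massAdd_of ha hb hab, massAdd_of hb ha hba, add_comm]
    ext t; simp; tauto

lemma left_mem_massAdd {a : F} (ha : a ≠ 0) (b : F) : a ∈ massAdd a b := by
  rcases eq_or_ne b 0 with rfl | hb
  · rw [massAdd_zero_right]; exact rfl
  rcases eq_or_ne b (-a) with rfl | hab
  · rw [massAdd_neg ha]; trivial
  · rw [massAdd_of ha hb hab]; exact Set.mem_insert _ _

lemma right_mem_massAdd {b : F} (hb : b ≠ 0) (a : F) : b ∈ massAdd a b := by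
  rw [massAdd_comm]; exact left_mem_massAdd hb a

lemma zero_mem_massAdd_iff {x y : F} : 0 ∈ massAdd x y ↔ y = -x := by
  rcases eq_or_ne x 0 with rfl | hx
  · rw [massAdd_zero_left]; simp [eq_comm]
  rcases eq_or_ne y 0 with rfl | hy
  · rw [massAdd_zero_right]
    simp [eq_comm, hx, neg_eq_zero]
  rcases eq_or_ne y (-x) with rfl | hxy
  · simp [massAdd_neg hx]
  · rw [massAdd_of hx hy hxy]
    have hsum : x + y ≠ 0 := fun h => hxy (by linear_combination h)
    simp only [Set.mem_insert_iff, Set.mem_singleton_iff]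
    constructor
    · rintro (h | h | h)
      · exact absurd h.symm hx
      · exact absurd h.symm hy
      · exact absurd h.symm hsum
    · intro h; exact absurd h hxy


omit [Field F] in
lemma hAddSet_triple_left (add : F → F → Set F) (a b c z : F) :
    hAddSet add {a, b, c} {z} = add a z ∪ add b z ∪ add c z := by
  ext t; simp [hAddSet]; tauto

omit [Field F] in
lemma hAddSet_triple_right (add : F → F → Set F) (x a b c : F) :
    hAddSet add {x} {a, b, c} = add x a ∪ add x b ∪ add x c := by
  ext t; simp [hAddSet]; tauto

lemma massAdd_assoc (x y z : F) :
    hAddSet massAdd (massAdd x y) {z} = hAddSet massAdd {x} (massAdd y z) := by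
  have memL : ∀ t : F, t ∈ hAddSet massAdd (massAdd x y) {z} ↔
      ∃ a ∈ massAdd x y, t ∈ massAdd a z := by
    intro t; simp [hAddSet]
  have memR : ∀ t : F, t ∈ hAddSet massAdd {x} (massAdd y z) ↔
      ∃ b ∈ massAdd y z, t ∈ massAdd x b := by
    intro t; simp [hAddSet]
  rcases eq_or_ne x 0 with rfl | hx
  · ext t; rw [memL, memR]; simp [massAdd_zero_left]
  rcases eq_or_ne y 0 with rfl | hy
  · ext t; rw [memL, memR]; simp [massAdd_zero_right, massAdd_zero_left]
  rcases eq_or_ne z 0 with rfl | hz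
  · ext t; rw [memL, memR]; simp [massAdd_zero_right]
  rcases eq_or_ne y (-x) with rfl | hyx
  · ext t; rw [memL, memR]
    constructor
    · intro _
      exact ⟨-x, left_mem_massAdd (neg_ne_zero.mpr hx) z,
        by rw [massAdd_neg hx]; exact Set.mem_univ t⟩
    · intro _
      exact ⟨-z, by rw [massAdd_neg hx]; exact Set.mem_univ (-z),
        by rw [massAdd_neg' hz]; exact Set.mem_univ t⟩
  rcases eq_or_ne z (-y) with rfl | hzy
  · ext t; rw [memL, memR]
    constructor
    · intro _
      exact ⟨-x, by rw [massAdd_neg hy]; exact Set.mem_univ (-x),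
        by rw [massAdd_neg hx]; exact Set.mem_univ t⟩
    · intro _
      exact ⟨y, right_mem_massAdd hy x, by rw [massAdd_neg hy]; exact Set.mem_univ t⟩
  rcases eq_or_ne z (-x) with rfl | hzx
  · ext t; rw [memL, memR]
    constructor
    · intro _
      exact ⟨-x, right_mem_massAdd (neg_ne_zero.mpr hx) y,
        by rw [massAdd_neg hx]; exact Set.mem_univ t⟩
    · intro _
      exact ⟨x, left_mem_massAdd hx y, by rw [massAdd_neg hx]; exact Set.mem_univ t⟩
  have hxy : x + y ≠ 0 := fun h => hyx (by linear_combination h)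
  have hyz : y + z ≠ 0 := fun h => hzy (by linear_combination h)
  rcases eq_or_ne (x + y + z) 0 with hs | hs
  · have hz' : z = -(x + y) := by linear_combination hs
    have hx' : y + z = -x := by linear_combination hs
    ext t; rw [memL, memR]
    constructor
    · intro _
      refine ⟨y + z, ?_, ?_⟩
      · rw [massAdd_of hy hz hzy]; right; right; rfl
      · rw [hx', massAdd_neg hx]; exact Set.mem_univ t
    · intro _
      refine ⟨x + y, ?_, ?_⟩
      · rw [massAdd_of hx hy hyx]; right; right; rfl
      · rw [hz', massAdd_neg hxy]; exact Set.mem_univ t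
  · have h1 : z ≠ -(x + y) := fun h => hs (by linear_combination h)
    have h2 : y + z ≠ -x := fun h => hs (by linear_combination h)
    rw [massAdd_of hx hy hyx, massAdd_of hy hz hzy, hAddSet_triple_left, hAddSet_triple_right,
      massAdd_of hx hz hzx, massAdd_of hy hz hzy, massAdd_of hxy hz h1,
      massAdd_of hx hyz h2, massAdd_of hx hy hyx, ← add_assoc]
    ext t
    simp only [Set.mem_union, Set.mem_insert_iff, Set.mem_singleton_iff]
    tauto

lemma massAdd_opp (x : F) : ∃! x', (0:F) ∈ massAdd x x' :=
  ⟨-x, zero_mem_massAdd_iff.mpr rfl, fun _ hy => zero_mem_massAdd_iff.mp hy⟩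

lemma massAdd_rev (x y z x' y' : F) (h1 : 0 ∈ massAdd x x') (h2 : 0 ∈ massAdd y y')
    (h3 : z ∈ massAdd x y) : y ∈ massAdd x' z ∧ x ∈ massAdd z y' := by
  rw [zero_mem_massAdd_iff] at h1 h2
  subst h1 h2
  rcases eq_or_ne x 0 with rfl | hx
  · rw [massAdd_zero_left, Set.mem_singleton_iff] at h3
    subst h3
    refine ⟨by rw [neg_zero, massAdd_zero_left]; rfl, ?_⟩
    rcases eq_or_ne z 0 with rfl | hz0
    · rw [neg_zero, massAdd_zero_right]; rfl
    · rw [massAdd_neg hz0]; exact Set.mem_univ 0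
  rcases eq_or_ne y 0 with rfl | hy
  · rw [massAdd_zero_right, Set.mem_singleton_iff] at h3
    subst h3
    exact ⟨by rw [massAdd_neg' hx]; exact Set.mem_univ 0,
      by rw [neg_zero, massAdd_zero_right]; rfl⟩
  rcases eq_or_ne y (-x) with rfl | hyx
  · exact ⟨left_mem_massAdd (neg_ne_zero.mpr hx) z,
      by rw [neg_neg]; exact right_mem_massAdd hx z⟩
  rw [massAdd_of hx hy hyx] at h3
  rcases h3 with rfl | rfl | rfl
  · exact ⟨by rw [massAdd_neg' hx]; exact Set.mem_univ y, left_mem_massAdd hx (-y)⟩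
  · exact ⟨right_mem_massAdd hy (-x), by rw [massAdd_neg hy]; exact Set.mem_univ x⟩
  · constructor
    · have hxy : x + y ≠ 0 := fun h => hyx (by linear_combination h)
      have hne : x + y ≠ -(-x) := by rw [neg_neg]; intro h; exact hy (by linear_combination h)
      rw [massAdd_of (neg_ne_zero.mpr hx) hxy hne]
      right; right; rw [Set.mem_singleton_iff]; ring
    · have hxy : x + y ≠ 0 := fun h => hyx (by linear_combination h)
      have hne : -y ≠ -(x + y) := fun h => hx (by linear_combination h)
      rw [massAdd_of hxy (neg_ne_zero.mpr hy) hne]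
      right; right; rw [Set.mem_singleton_iff]; ring

lemma massAdd_mul_left (a b c : F) :
    (fun x => a * x) '' massAdd b c = massAdd (a * b) (a * c) := by
  rcases eq_or_ne a 0 with rfl | ha
  · obtain ⟨w, hw⟩ := massAdd_nonempty b c
    simp only [zero_mul, massAdd_zero_left]
    ext t
    simp only [Set.mem_image, Set.mem_singleton_iff]
    constructor
    · rintro ⟨x, _, rfl⟩; exact rfl
    · rintro rfl; exact ⟨w, hw, rfl⟩
  rcases eq_or_ne b 0 with rfl | hb
  · simp [massAdd_zero_left, Set.image_singleton]
  rcases eq_or_ne c 0 with rfl | hc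
  · simp [massAdd_zero_right, Set.image_singleton]
  rcases eq_or_ne c (-b) with rfl | hcb
  · rw [massAdd_neg hb, mul_neg, massAdd_neg (mul_ne_zero ha hb), Set.image_univ]
    exact Set.range_eq_univ.mpr fun t => ⟨a⁻¹ * t, by field_simp⟩
  · rw [massAdd_of hb hc hcb, massAdd_of (mul_ne_zero ha hb) (mul_ne_zero ha hc)
      (fun h => hcb (mul_left_cancel₀ ha (by rw [h, mul_neg])))]
    rw [Set.image_insert_eq, Set.image_insert_eq, Set.image_singleton, mul_add]

lemma massAdd_mul_right (a b c : F) :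
    (fun x => x * a) '' massAdd b c = massAdd (b * a) (c * a) := by
  have h : (fun x : F => x * a) = fun x => a * x := by funext x; ring
  rw [h, massAdd_mul_left, mul_comm a b, mul_comm a c]

end helpers

/-- the Massouros construction on any field is a Krasner hyperfield. -/
theorem massouros_isKrasnerHyperfield (F : Type*) [Field F] :
    IsKrasnerHyperfield (massAdd (F := F)) (· * ·) 0 1 := by
  refine ⟨⟨⟨massAdd_nonempty, massAdd_comm, massAdd_assoc, massAdd_zero_left,
    massAdd_opp, massAdd_rev⟩, mul_assoc, mul_comm, one_mul, zero_mul, mul_zero,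
    massAdd_mul_left, massAdd_mul_right⟩, zero_ne_one, ?_⟩
  exact fun a ha => ⟨a⁻¹, inv_ne_zero ha, mul_inv_cancel₀ ha⟩
end

section
/- For every integer n ≥ 2 there exists a Krasner hyperfield with exactly n elements. -/
section M
variable {R : Type} [CommGroupWithZero R] [DecidableEq R]

def madd (x y : R) : Set R :=
  if x = 0 then {y} else if y = 0 then {x} else if x = y then {z | z ≠ x} else {x, y}

lemma madd_zero_left (y : R) : madd 0 y = {y} := by simp [madd]

lemma madd_zero_right (x : R) : madd x 0 = {x} := by
  unfold madd; split_ifs <;> simp_all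

lemma madd_comm (x y : R) : madd x y = madd y x := by
  unfold madd
  split_ifs <;>
    first
      | rfl
      | (subst_vars; rfl)
      | exact Set.pair_comm _ _
      | tauto

lemma madd_self (x : R) (hx : x ≠ 0) : madd x x = {z | z ≠ x} := by simp [madd, hx]

lemma madd_of_ne (x y : R) (hx : x ≠ 0) (hy : y ≠ 0) (hxy : x ≠ y) :
    madd x y = {x, y} := by simp [madd, hx, hy, hxy]

lemma zero_mem_madd_iff (x w : R) : 0 ∈ madd x w ↔ w = x := by
  unfold madd
  split_ifs <;> simp_all [eq_comm]

def tri (x y z : R) : Set R :=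
  if x = y ∧ y = z then {w | w ≠ 0}
  else if x = y ∨ y = z ∨ x = z then Set.univ
  else {x, y, z}

lemma tri_symm (x y z : R) : tri x y z = tri z y x := by
  unfold tri
  split_ifs <;> try tauto
  · ext w; simp; tauto

lemma sumset (x y z : R) (hx : x ≠ 0) (hy : y ≠ 0) (hz : z ≠ 0) :
    (⋃ a ∈ madd x y, madd a z) = tri x y z := by
  unfold tri
  split_ifs with h1 h2
  · -- x = y = z
    obtain ⟨rfl, rfl⟩ : x = y ∧ y = z := h1
    rw [madd_self x hx]
    ext w
    simp only [Set.mem_iUnion, Set.mem_setOf_eq, exists_prop]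
    constructor
    · rintro ⟨a, ha, hw⟩
      by_cases ha0 : a = 0
      · subst ha0; rw [madd_zero_left] at hw
        simp at hw; subst hw; exact hx
      · rw [madd_of_ne a x ha0 hx ha] at hw
        rcases hw with rfl | rfl
        · exact ha0
        · exact hx
    · intro hw0
      by_cases hwx : w = x
      · exact ⟨0, Ne.symm hx, by rw [madd_zero_left]; simp [hwx]⟩
      · exact ⟨w, hwx, by rw [madd_of_ne w x hw0 hx hwx]; simp⟩
  · -- two equal among x,y,z but not all three
    rw [Set.eq_univ_iff_forall]
    intro w
    simp only [Set.mem_iUnion, exists_prop]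
    rcases h2 with hxy | hyz | hxz
    · -- x = y, z ≠ y
      obtain rfl := hxy
      have hzx : z ≠ x := fun h => h1 ⟨rfl, h.symm⟩
      rw [madd_self x hx]
      by_cases hwz : w = z
      · exact ⟨0, Ne.symm hx, by rw [madd_zero_left]; simp [hwz]⟩
      · exact ⟨z, hzx, by rw [madd_self z hz]; exact hwz⟩
    · -- y = z, x ≠ y
      obtain rfl := hyz
      have hxy : x ≠ y := fun h => h1 ⟨h, rfl⟩
      rw [madd_of_ne x y hx hy hxy]
      by_cases hwy : w = y
      · exact ⟨x, Or.inl rfl, by rw [madd_of_ne x y hx hy hxy]; simp [hwy]⟩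
      · exact ⟨y, Or.inr rfl, by rw [madd_self y hy]; exact hwy⟩
    · -- x = z
      obtain rfl := hxz
      by_cases hxy : x = y
      · exact absurd ⟨hxy, hxy.symm⟩ h1
      · rw [madd_of_ne x y hx hy hxy]
        by_cases hwx : w = x
        · exact ⟨y, Or.inr rfl, by
            rw [madd_comm, madd_of_ne x y hx hy hxy]; simp [hwx]⟩
        · exact ⟨x, Or.inl rfl, by rw [madd_self x hx]; exact hwx⟩
  · -- all distinct
    push_neg at h2
    obtain ⟨hxy, hyz, hxz⟩ := h2
    rw [madd_of_ne x y hx hy hxy]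
    ext w
    simp only [Set.mem_iUnion, exists_prop, Set.mem_insert_iff, Set.mem_singleton_iff]
    constructor
    · rintro ⟨a, (rfl | rfl), hw⟩
      · rw [madd_of_ne a z hx hz hxz] at hw
        rcases hw with rfl | rfl <;> tauto
      · rw [madd_of_ne a z hy hz hyz] at hw
        rcases hw with rfl | rfl <;> tauto
    · rintro (rfl | rfl | rfl)
      · exact ⟨w, Or.inl rfl, by rw [madd_of_ne w z hx hz hxz]; simp⟩
      · exact ⟨w, Or.inr rfl, by rw [madd_of_ne w z hy hz hyz]; simp⟩
      · exact ⟨x, Or.inl rfl, by rw [madd_of_ne x w hx hz hxz]; simp⟩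

lemma madd_assoc (x y z : R) :
    hAddSet madd (madd x y) {z} = hAddSet madd {x} (madd y z) := by
  have hL : hAddSet madd (madd x y) {z} = ⋃ a ∈ madd x y, madd a z := by
    simp [hAddSet]
  have hR : hAddSet madd {x} (madd y z) = ⋃ b ∈ madd y z, madd x b := by
    ext w; simp [hAddSet]
  rw [hL, hR]
  by_cases hx : x = 0
  · subst hx
    rw [madd_zero_left]
    ext w
    simp [madd_zero_left]
  by_cases hz : z = 0
  · subst hz
    ext w
    simp [madd_zero_right]
  by_cases hy : y = 0
  · subst hy
    rw [madd_zero_right x, madd_zero_left z]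
    simp
  · have h1 := sumset x y z hx hy hz
    have h2 : (⋃ b ∈ madd y z, madd x b) = tri z y x := by
      rw [← sumset z y x hz hy hx, madd_comm z y]
      ext w
      simp only [Set.mem_iUnion, exists_prop]
      constructor
      · rintro ⟨b, hb, hw⟩; exact ⟨b, hb, by rwa [madd_comm]⟩
      · rintro ⟨b, hb, hw⟩; exact ⟨b, hb, by rwa [madd_comm]⟩
    rw [h1, h2, tri_symm]

end M

section M2
variable {R : Type} [CommGroupWithZero R] [DecidableEq R]

lemma madd_nonempty (x y : R) : (madd x y).Nonempty := by
  unfold madd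
  split_ifs with h1 h2 h3
  · exact ⟨y, rfl⟩
  · exact ⟨x, rfl⟩
  · exact ⟨0, Ne.symm h1⟩
  · exact ⟨x, Or.inl rfl⟩

lemma madd_opp (x : R) : ∃! x', (0 : R) ∈ madd x x' := by
  exact ⟨x, (zero_mem_madd_iff x x).mpr rfl, fun w hw => (zero_mem_madd_iff x w).mp hw⟩

lemma madd_rev (x y z : R) (hz : z ∈ madd x y) : y ∈ madd x z ∧ x ∈ madd z y := by
  by_cases hx : x = 0
  · subst hx
    rw [madd_zero_left] at hz
    have hzy : z = y := hz
    constructor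
    · rw [madd_zero_left]; exact hzy.symm
    · rw [hzy]; exact (zero_mem_madd_iff y y).mpr rfl
  by_cases hy : y = 0
  · subst hy
    rw [madd_zero_right] at hz
    have hzx : z = x := hz
    exact ⟨by rw [hzx]; exact (zero_mem_madd_iff x x).mpr rfl,
      by rw [madd_zero_right]; exact hzx.symm⟩
  by_cases hxy : x = y
  · obtain rfl := hxy
    rw [madd_self x hx] at hz
    have hzx : z ≠ x := hz
    by_cases hz0 : z = 0
    · subst hz0
      exact ⟨by rw [madd_zero_right]; rfl, by rw [madd_zero_left]; rfl⟩
    · constructor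
      · rw [madd_of_ne x z hx hz0 (Ne.symm hzx)]; exact Or.inl rfl
      · rw [madd_of_ne z x hz0 hx hzx]; exact Or.inr rfl
  · rw [madd_of_ne x y hx hy hxy] at hz
    rcases hz with rfl | rfl
    · constructor
      · rw [madd_self z hx]; exact Ne.symm hxy
      · rw [madd_of_ne z y hx hy hxy]; exact Or.inl rfl
    · constructor
      · rw [madd_of_ne x z hx hy hxy]; exact Or.inr rfl
      · rw [madd_self z hy]; exact hxy

lemma madd_ldistrib (a b c : R) : (a * ·) '' madd b c = madd (a * b) (a * c) := by
  by_cases ha : a = 0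
  · subst ha
    simp only [zero_mul, madd_zero_left]
    ext w
    simp only [Set.mem_image, Set.mem_singleton_iff]
    constructor
    · rintro ⟨z, hz, rfl⟩; simp
    · rintro rfl
      obtain ⟨z, hz⟩ := madd_nonempty b c
      exact ⟨z, hz, by simp⟩
  by_cases hb : b = 0
  · subst hb
    rw [madd_zero_left, mul_zero, madd_zero_left, Set.image_singleton]
  by_cases hc : c = 0
  · subst hc
    rw [madd_zero_right, mul_zero, madd_zero_right, Set.image_singleton]
  have hab : a * b ≠ 0 := mul_ne_zero ha hb
  have hac : a * c ≠ 0 := mul_ne_zero ha hc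
  by_cases hbc : b = c
  · obtain rfl := hbc
    rw [madd_self b hb, madd_self _ hab]
    ext w
    simp only [Set.mem_image, Set.mem_setOf_eq]
    constructor
    · rintro ⟨z, hz, rfl⟩
      exact fun h => hz (mul_left_cancel₀ ha h)
    · intro hw
      refine ⟨a⁻¹ * w, fun h => hw ?_, by field_simp⟩
      rw [← h]; field_simp
  · rw [madd_of_ne b c hb hc hbc, madd_of_ne _ _ hab hac
      (fun h => hbc (mul_left_cancel₀ ha h)), Set.image_pair]

lemma madd_hyperfield : IsKrasnerHyperfield (madd (R := R)) (· * ·) 0 1 := by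
  refine ⟨⟨⟨madd_nonempty, madd_comm, madd_assoc, madd_zero_left, madd_opp, ?_⟩,
      mul_assoc, mul_comm, one_mul, zero_mul, mul_zero, madd_ldistrib, ?_⟩,
      zero_ne_one, fun a ha => ⟨a⁻¹, inv_ne_zero ha, mul_inv_cancel₀ ha⟩⟩
  · intro x y z x' y' hx' hy' hz
    have e1 : x' = x := (zero_mem_madd_iff x x').mp hx'
    have e2 : y' = y := (zero_mem_madd_iff y y').mp hy'
    rw [e1, e2]
    exact madd_rev x y z hz
  · intro a b c
    have : (fun x => x * a) = (a * ·) := by funext x; exact mul_comm x a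
    rw [this, madd_ldistrib, mul_comm a b, mul_comm a c]

end M2

/-- for every integer `n ≥ 2` there exists a Krasner hyperfield with
exactly `n` elements. -/
theorem exists_krasnerHyperfield_of_card (n : ℕ) (hn : 2 ≤ n) :
    ∃ (R : Type) (_ : Fintype R) (add : R → R → Set R) (mul : R → R → R)
      (zero one : R), IsKrasnerHyperfield add mul zero one ∧ Fintype.card R = n := by
  haveI : NeZero (n - 1) := ⟨by omega⟩
  haveI : CommGroupWithZero (Option (Multiplicative (ZMod (n - 1)))) :=
    inferInstanceAs (CommGroupWithZero (WithZero (Multiplicative (ZMod (n - 1)))))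
  refine ⟨Option (Multiplicative (ZMod (n - 1))), inferInstance, madd, (· * ·), 0, 1,
    madd_hyperfield, ?_⟩
  rw [Fintype.card_option, Fintype.card_multiplicative, ZMod.card]
  omega
end
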